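/- arXiv:2108.09831 — 2 statements merged into one kernel-verified Lean document; each statement's English description precedes it below -/
import Mathlib

section
/- If φ is an orthonormal N-frame and η ∈ T_φ, then R := (φ+η)·(I_N + ⟦η,η⟧)^{-1/2} is again an orthonormal N-frame, i.e. ⟦R, R⟧ = I_N. -/
open scoped RealInnerProductSpace

/-- The outer product `⟦v,w⟧ ∈ ℝ^{N×N}` of two tuples, with entries `⟨v i, w j⟩`. -/
noncomputable def outerProd {N : ℕ} {H₀ : Type*} [NormedAddCommGroup H₀]
    [InnerProductSpace ℝ H₀] (v w : Fin N → H₀) : Matrix (Fin N) (Fin N) ℝ :=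
  Matrix.of fun i j => ⟪v i, w j⟫

/-- Multiplication of a tuple by a matrix from the right: `(vS)_j = Σ_i S_{ij} v_i`. -/
def smulMat {N : ℕ} {H₀ : Type*} [AddCommGroup H₀] [Module ℝ H₀]
    (v : Fin N → H₀) (S : Matrix (Fin N) (Fin N) ℝ) : Fin N → H₀ :=
  fun j => ∑ i, S i j • v i

/-- The inner product `(v,w)_H = Σ_j ⟨v_j, w_j⟩ = tr⟦v,w⟧`. -/
noncomputable def innerH {N : ℕ} {H₀ : Type*} [NormedAddCommGroup H₀]
    [InnerProductSpace ℝ H₀] (v w : Fin N → H₀) : ℝ :=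
  ∑ j, ⟪v j, w j⟫

/-!
Since `η` is tangent at the orthonormal frame `φ`, the cross terms cancel in the Gram matrix
of `φ + η`, which is therefore `I + ⟦η,η⟧ = S²`. Right multiplication by a matrix transforms
Gram matrices by congruence, `⟦vA, vA⟧ = Aᵀ⟦v,v⟧A`, so for symmetric invertible `S` the
Gram matrix of `(φ + η)S⁻¹` is `S⁻¹ S² S⁻¹ = I`. Invertibility of `S` comes from
`I + ⟦η,η⟧` being positive definite, as the identity plus a Gram matrix.
-/

open Matrix

theorem Matrix.isUnit_of_mul_self_eq_one_add_posSemidef {n K : Type*} [Fintype n]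
    [DecidableEq n] [Field K] [PartialOrder K] [StarRing K] [StarOrderedRing K]
    {S G : Matrix n n K} (hG : G.PosSemidef) (hS : S * S = 1 + G) : IsUnit S :=
  isUnit_of_mul_isUnit_right <| hS ▸ (PosDef.one.add_posSemidef hG).isUnit

section OuterProd

variable {N : ℕ} {H₀ : Type*} [NormedAddCommGroup H₀] [InnerProductSpace ℝ H₀]

theorem outerProd_add_left (u v w : Fin N → H₀) :
    outerProd (u + v) w = outerProd u w + outerProd v w := by
  ext i j
  simp [outerProd, inner_add_left]

theorem outerProd_add_right (u v w : Fin N → H₀) :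
    outerProd u (v + w) = outerProd u v + outerProd u w := by
  ext i j
  simp [outerProd, inner_add_right]

theorem outerProd_self_eq_gram (v : Fin N → H₀) : outerProd v v = gram ℝ v := rfl

theorem outerProd_self_posSemidef (v : Fin N → H₀) : (outerProd v v).PosSemidef :=
  outerProd_self_eq_gram v ▸ posSemidef_gram ℝ v

theorem outerProd_smulMat_smulMat (v w : Fin N → H₀) (A B : Matrix (Fin N) (Fin N) ℝ) :
    outerProd (smulMat v A) (smulMat w B) = Aᵀ * outerProd v w * B := by
  ext j l
  simp only [outerProd, smulMat, of_apply, mul_apply, transpose_apply, sum_inner, inner_sum,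
    real_inner_smul_left, real_inner_smul_right, Finset.sum_mul]
  exact Finset.sum_congr rfl fun k _ => Finset.sum_congr rfl fun i _ => by ring

theorem outerProd_add_self_of_tangent {φ η : Fin N → H₀} (hφ : outerProd φ φ = 1)
    (hη : outerProd η φ + outerProd φ η = 0) :
    outerProd (φ + η) (φ + η) = 1 + outerProd η η :=
  calc outerProd (φ + η) (φ + η)
      = outerProd φ φ + (outerProd η φ + outerProd φ η) + outerProd η η := by
        simp only [outerProd_add_left, outerProd_add_right]; abel
    _ = 1 + outerProd η η := by rw [hφ, hη, add_zero]

theorem outerProd_smulMat_inv_self_eq_one {w : Fin N → H₀} {S : Matrix (Fin N) (Fin N) ℝ}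
    (hS : S.IsHermitian) (hSunit : IsUnit S) (hw : outerProd w w = S * S) :
    outerProd (smulMat w S⁻¹) (smulMat w S⁻¹) = 1 := by
  have hSt : Sᵀ = S := by rwa [IsHermitian, conjTranspose_eq_transpose_of_trivial] at hS
  have hdet : IsUnit S.det := (isUnit_iff_isUnit_det S).mp hSunit
  rw [outerProd_smulMat_smulMat, hw, transpose_nonsing_inv, hSt, ← mul_assoc,
    nonsing_inv_mul _ hdet, one_mul, mul_nonsing_inv _ hdet]

end OuterProd

theorem polar_retraction_mem_stiefel_general {N : ℕ} {H₀ : Type*}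
    [NormedAddCommGroup H₀] [InnerProductSpace ℝ H₀]
    (φ η : Fin N → H₀) (hφ : outerProd φ φ = 1)
    (hη : outerProd η φ + outerProd φ η = 0)
    (S : Matrix (Fin N) (Fin N) ℝ) (hS : S.PosSemidef)
    (hSsq : S * S = 1 + outerProd η η) :
    outerProd (smulMat (φ + η) S⁻¹) (smulMat (φ + η) S⁻¹) = 1 :=
  outerProd_smulMat_inv_self_eq_one hS.isHermitian
    (isUnit_of_mul_self_eq_one_add_posSemidef (outerProd_self_posSemidef η) hSsq)
    (hSsq ▸ outerProd_add_self_of_tangent hφ hη)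

/-- the polar-decomposition-based retraction
`R = (φ+η)·(I + ⟦η,η⟧)^{-1/2}` is again an orthonormal frame. Here the square root
`(I + ⟦η,η⟧)^{1/2}` is represented by any symmetric positive semidefinite matrix `S`
with `S * S = I + ⟦η,η⟧` (such an `S` is unique), and `(I + ⟦η,η⟧)^{-1/2} = S⁻¹`. -/
theorem polar_retraction_mem_stiefel {N : ℕ} (hN : 1 ≤ N) {H₀ : Type*}
    [NormedAddCommGroup H₀] [InnerProductSpace ℝ H₀]
    (φ η : Fin N → H₀) (hφ : outerProd φ φ = 1)
    (hη : outerProd η φ + outerProd φ η = 0)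
    (S : Matrix (Fin N) (Fin N) ℝ) (hS : S.PosSemidef)
    (hSsq : S * S = 1 + outerProd η η) :
    outerProd (smulMat (φ + η) S⁻¹) (smulMat (φ + η) S⁻¹) = 1 :=
  polar_retraction_mem_stiefel_general φ η hφ hη S hS hSsq
end

section
/- Let φ be an orthonormal N-frame and η ∈ T_φ. Suppose q : ℝ → (Fin N → E) and R : ℝ → ℝ^{N×N} are differentiable at 0 and satisfy, for all t in a neighborhood of 0: q(t)·R(t) = φ + tη, ⟦q(t), q(t)⟧ = I_N, R(t) is upper triangular, q(0) = φ and R(0) = I_N. Then q has derivative η at t = 0 (so the qR-based retraction satisfies the local rigidity condition of a retraction). -/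
open scoped RealInnerProductSpace

/-! Differentiating `q(t) R(t) = φ + tη` at `0` gives `q'(0) = η - φ R'(0)`. Differentiating
`⟦q,q⟧ = I` shows `⟦q'(0),φ⟧ + ⟦φ,q'(0)⟧ = 0`, which together with `η ∈ T_φ` forces `R'(0)` to be
skew-symmetric. Being also upper triangular, `R'(0)` vanishes, so `q'(0) = η`. -/

open scoped Matrix

theorem Matrix.IsUpperTriangular.eq_zero_of_transpose_add_self {n R : Type*} [LinearOrder n]
    [NonAssocRing R] [NoZeroDivisors R] [CharZero R] {A : Matrix n n R}
    (htri : A.IsUpperTriangular) (hskew : Aᵀ + A = 0) : A = 0 := by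
  ext i j
  have hij : A j i + A i j = 0 := congrFun (congrFun hskew i) j
  rcases lt_trichotomy i j with h | rfl | h
  · simpa [htri h] using hij
  · exact add_self_eq_zero.mp hij
  · exact htri h

theorem Matrix.IsUpperTriangular.of_hasDerivAt {n : Type*} [LT n]
    {R : ℝ → Matrix n n ℝ} {A : Matrix n n ℝ} {t : ℝ}
    (hR : ∀ i j, HasDerivAt (fun s => R s i j) (A i j) t)
    (htri : ∀ᶠ s in nhds t, (R s).IsUpperTriangular) : A.IsUpperTriangular := by
  intro i j hij
  refine (hR i j).unique ((hasDerivAt_const t 0).congr_of_eventuallyEq ?_)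
  filter_upwards [htri] with s hs using hs hij

section Frames

@[simp]
theorem smulMat_one {N : ℕ} {M : Type*} [AddCommGroup M] [Module ℝ M] (v : Fin N → M) :
    smulMat v 1 = v := by
  funext j
  simp [smulMat, Matrix.one_apply]

@[simp]
theorem smulMat_zero {N : ℕ} {M : Type*} [AddCommGroup M] [Module ℝ M] (v : Fin N → M) :
    smulMat v 0 = 0 := by
  funext j
  simp [smulMat]

variable {N : ℕ} {E : Type*} [NormedAddCommGroup E] [InnerProductSpace ℝ E]

@[simp]
theorem outerProd_apply (v w : Fin N → E) (i j : Fin N) : outerProd v w i j = ⟪v i, w j⟫ := rfl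

theorem outerProd_sub_left (u v w : Fin N → E) :
    outerProd (u - v) w = outerProd u w - outerProd v w := by
  ext i j
  simp [inner_sub_left]

theorem outerProd_sub_right (u v w : Fin N → E) :
    outerProd u (v - w) = outerProd u v - outerProd u w := by
  ext i j
  simp [inner_sub_right]

theorem outerProd_smulMat_left (v w : Fin N → E) (S : Matrix (Fin N) (Fin N) ℝ) :
    outerProd (smulMat v S) w = Sᵀ * outerProd v w := by
  ext i j
  simp [smulMat, Matrix.mul_apply, sum_inner, inner_smul_left]

theorem outerProd_smulMat_right (v w : Fin N → E) (S : Matrix (Fin N) (Fin N) ℝ) :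
    outerProd v (smulMat w S) = outerProd v w * S := by
  ext i j
  simp [smulMat, Matrix.mul_apply, inner_sum, inner_smul_right, mul_comm]

theorem HasDerivAt.smulMat {q : ℝ → Fin N → E} {q' : Fin N → E}
    {R : ℝ → Matrix (Fin N) (Fin N) ℝ} {A : Matrix (Fin N) (Fin N) ℝ} {t : ℝ}
    (hq : HasDerivAt q q' t) (hR : ∀ i j, HasDerivAt (fun s => R s i j) (A i j) t) :
    HasDerivAt (fun s => smulMat (q s) (R s)) (smulMat q' (R t) + smulMat (q t) A) t := by
  refine hasDerivAt_pi.2 fun j => ?_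
  simp only [_root_.smulMat, Pi.add_apply, ← Finset.sum_add_distrib]
  exact HasDerivAt.fun_sum fun i _ => (hR i j).smul (hasDerivAt_pi.1 hq i)

theorem HasDerivAt.outerProd_apply {v w : ℝ → Fin N → E} {v' w' : Fin N → E} {t : ℝ}
    (hv : HasDerivAt v v' t) (hw : HasDerivAt w w' t) (i j : Fin N) :
    HasDerivAt (fun s => outerProd (v s) (w s) i j)
      (outerProd v' (w t) i j + outerProd (v t) w' i j) t := by
  simpa [add_comm] using (hasDerivAt_pi.1 hv i).inner ℝ (hasDerivAt_pi.1 hw j)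

theorem outerProd_add_outerProd_eq_zero_of_hasDerivAt {q : ℝ → Fin N → E} {q' : Fin N → E}
    {t : ℝ} (hq : HasDerivAt q q' t) (horth : ∀ᶠ s in nhds t, outerProd (q s) (q s) = 1) :
    outerProd q' (q t) + outerProd (q t) q' = 0 := by
  ext i j
  refine (hq.outerProd_apply hq i j).unique
    ((hasDerivAt_const t ((1 : Matrix _ _ ℝ) i j)).congr_of_eventuallyEq ?_)
  filter_upwards [horth] with s hs
  rw [hs]

end Frames

theorem qR_retraction_local_rigidity_general {N : ℕ} {E : Type*}
    [NormedAddCommGroup E] [InnerProductSpace ℝ E]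
    (φ η : Fin N → E) (hφ : outerProd φ φ = 1)
    (hη : outerProd η φ + outerProd φ η = 0)
    (q : ℝ → Fin N → E) (R : ℝ → Matrix (Fin N) (Fin N) ℝ)
    (hqdiff : DifferentiableAt ℝ q 0)
    (hRdiff : ∀ i j : Fin N, DifferentiableAt ℝ (fun t => R t i j) 0)
    (heq : ∀ᶠ t in nhds (0 : ℝ), smulMat (q t) (R t) = φ + t • η)
    (horth : ∀ᶠ t in nhds (0 : ℝ), outerProd (q t) (q t) = 1)
    (htri : ∀ᶠ t in nhds (0 : ℝ), ∀ i j : Fin N, j < i → R t i j = 0)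
    (hq0 : q 0 = φ) (hR0 : R 0 = 1) :
    HasDerivAt q η 0 := by
  set A : Matrix (Fin N) (Fin N) ℝ := Matrix.of fun i j => deriv (fun t => R t i j) 0
  have hR : ∀ i j, HasDerivAt (fun t => R t i j) (A i j) 0 := fun i j => (hRdiff i j).hasDerivAt
  have hq := hqdiff.hasDerivAt
  have hq' : deriv q 0 = η - smulMat φ A := by
    have hline : HasDerivAt (fun t : ℝ => φ + t • η) η 0 := by
      simpa using ((hasDerivAt_id (0 : ℝ)).smul_const η).const_add φ
    have hprod := hq.smulMat hR
    rw [hq0, hR0, smulMat_one] at hprod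
    rw [← hprod.unique (hline.congr_of_eventuallyEq heq), add_sub_cancel_right]
  have hA : A = 0 := by
    refine (Matrix.IsUpperTriangular.of_hasDerivAt hR ?_).eq_zero_of_transpose_add_self ?_
    · filter_upwards [htri] with t ht i j hij using ht i j hij
    · have htan := outerProd_add_outerProd_eq_zero_of_hasDerivAt hq horth
      rw [hq0, hq', outerProd_sub_left, outerProd_sub_right, outerProd_smulMat_left,
        outerProd_smulMat_right, hφ, Matrix.mul_one, Matrix.one_mul, sub_add_sub_comm, hη,
        zero_sub, neg_eq_zero] at htan
      exact htan
  rwa [hq', hA, smulMat_zero, sub_zero] at hq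

/-- local rigidity of the `qR`-based retraction: if `q(t)R(t) = φ + tη` is
the `qR` decomposition of the curve `φ + tη` near `t = 0`, with `q, R` differentiable at
`0`, `q(0) = φ` and `R(0) = I`, then `q'(0) = η`. -/
theorem qR_retraction_local_rigidity {N : ℕ} (hN : 1 ≤ N) {E : Type*}
    [NormedAddCommGroup E] [InnerProductSpace ℝ E]
    (φ η : Fin N → E) (hφ : outerProd φ φ = 1)
    (hη : outerProd η φ + outerProd φ η = 0)
    (q : ℝ → Fin N → E) (R : ℝ → Matrix (Fin N) (Fin N) ℝ)
    (hqdiff : DifferentiableAt ℝ q 0)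
    (hRdiff : ∀ i j : Fin N, DifferentiableAt ℝ (fun t => R t i j) 0)
    (heq : ∀ᶠ t in nhds (0 : ℝ), smulMat (q t) (R t) = φ + t • η)
    (horth : ∀ᶠ t in nhds (0 : ℝ), outerProd (q t) (q t) = 1)
    (htri : ∀ᶠ t in nhds (0 : ℝ), ∀ i j : Fin N, j < i → R t i j = 0)
    (hq0 : q 0 = φ) (hR0 : R 0 = 1) :
    HasDerivAt q η 0 :=
  qR_retraction_local_rigidity_general φ η hφ hη q R hqdiff hRdiff heq horth htri hq0 hR0
end
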